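/- Let α ∈ ℕ₀⁴ with α₁ ≡ α₂ ≡ α₃ ≡ α₄ (mod 2), set b_i = (α_i + α₄)/2 for i = 1,2,3 and b₀ = (α₂+α₃)/2, b₁ = (α₁+α₄)/2. Then the double sum Σ_{i=0}^{⌊α₄/2⌋} Σ_{j=0}^{⌊α₃/2⌋} (-α₄)_{2i} (-α₃)_{2j} (κ)_{i+j} / (i! j! (1/2 - b₁)_i (1/2 - b₀)_j (1/2 - b₃)_{i+j} 2^{2i+2j}) equals [(κ+1/2)_{b₀} (1/2)_{b₂} / ((1/2)_{b₀} (κ+1/2)_{b₂})] · Σ_{i=0}^{⌊α₄/2⌋} (-α₄/2)_i ((1-α₄)/2)_i (κ)_i (-κ-b₁-b₀)_i / (i! (1/2 - b₁)_i (1/2 - b₂)_i (1/2 - b₃)_i), where b₂ = (α₂+α₄)/2. -/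

import Mathlib

noncomputable def poch (x : ℝ) (n : ℕ) : ℝ := ∏ i ∈ Finset.range n, (x + i)

open Finset

/-!
Write `α_i = 2 c_i + r` with a common parity `r`. The duplication formula
`(x)_{2i} = 4^i (x/2)_i ((x+1)/2)_i` turns `(-α₄)_{2i} / 4^i` into `(-c₄)_i (1/2 - c₄ - r)_i`, so
with `m = c₄`, `n = c₃`, `a = 1/2 - b₁`, `b = 1/2 - b₀`, `c = 1/2 - b₃` the double sum is
`∑ (-m)_i (-n)_j (c+n)_i (c+m)_j (κ)_{i+j} / (i! j! (a)_i (b)_j (c)_{i+j})`.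
For fixed `j`, Sheppard's transformation of the terminating `₃F₂` in `i` leaves `j` only in
`(κ + j)_l`, so the `j`-sum becomes a Chu–Vandermonde sum. What remains is a balanced terminating
`₄F₃`, and Whipple's transformation turns it into the stated one.
-/

lemma neg_one_pow_mul_self (n : ℕ) : (-1 : ℝ) ^ n * (-1) ^ n = 1 := by
  rw [← mul_pow]; norm_num

lemma neg_one_pow_sub {k n : ℕ} (h : k ≤ n) : (-1 : ℝ) ^ (n - k) = (-1) ^ n * (-1) ^ k := by
  obtain ⟨t, rfl⟩ := Nat.exists_eq_add_of_le h
  rw [Nat.add_sub_cancel_left, pow_add]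
  linear_combination (-(-1 : ℝ) ^ t) * neg_one_pow_mul_self k

lemma poch_zero (x : ℝ) : poch x 0 = 1 := by simp [poch]

lemma poch_succ (x : ℝ) (n : ℕ) : poch x (n + 1) = poch x n * (x + n) := by
  simp [poch, prod_range_succ]

lemma poch_add_of_eq {x y : ℝ} {m : ℕ} (h : x + m = y) (n : ℕ) :
    poch x (m + n) = poch x m * poch y n := by
  simp only [poch, prod_range_add, ← h]
  push_cast
  congr 1
  exact prod_congr rfl fun i _ => by ring

lemma poch_add (x : ℝ) (m n : ℕ) : poch x (m + n) = poch x m * poch (x + m) n :=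
  poch_add_of_eq rfl n

lemma poch_succ' (x : ℝ) (n : ℕ) : poch x (n + 1) = x * poch (x + 1) n := by
  rw [add_comm, poch_add_of_eq (y := x + 1) (by norm_num), poch, prod_range_one, Nat.cast_zero,
    add_zero]

lemma poch_split {x y : ℝ} {i m : ℕ} (hi : i ≤ m) (h : x + i = y) :
    poch x m = poch x i * poch y (m - i) := by
  rw [← poch_add_of_eq h, Nat.add_sub_cancel' hi]

lemma poch_ne_zero_of_le {x : ℝ} {i m : ℕ} (h : poch x m ≠ 0) (hi : i ≤ m) : poch x i ≠ 0 :=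
  left_ne_zero_of_mul (poch_split hi rfl ▸ h)

lemma poch_reflect {x y : ℝ} {n : ℕ} (h : x + y + n = 1) : poch x n = (-1) ^ n * poch y n := by
  induction n generalizing x y with
  | zero => simp [poch_zero]
  | succ n ih =>
    push_cast at h
    rw [poch_succ, poch_succ', ih (y := y + 1) (by linarith), show x + n = -y by linarith]
    ring

lemma poch_sub_mul_poch (c : ℝ) (l n : ℕ) :
    poch (c - l) n * poch (1 - c - n) l = poch c n * poch (1 - c) l := by
  have h1 := poch_add (1 - c - n) l n
  have h2 := poch_add_of_eq (show 1 - c - n + n = 1 - c by ring) l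
  rw [add_comm l n] at h1
  rw [poch_reflect (y := 1 - c - n + l) (by ring), poch_reflect (x := c) (y := 1 - c - n) (by ring)]
  linear_combination (-1 : ℝ) ^ n * (h2 - h1)

lemma poch_neg_nat (m i : ℕ) : poch (-m) i = (-1) ^ i * i.factorial * m.choose i := by
  induction i with
  | zero => simp [poch_zero]
  | succ i ih =>
    have key : (m.choose (i + 1) : ℝ) * (i + 1) = m.choose i * (m - i) := by
      rcases le_or_gt i m with hi | hi
      · have h := congrArg (Nat.cast : ℕ → ℝ) (Nat.choose_succ_right_eq m i)
        push_cast [Nat.cast_sub hi] at h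
        exact h
      · simp [Nat.choose_eq_zero_of_lt hi, Nat.choose_eq_zero_of_lt (Nat.lt_succ_of_lt hi)]
    rw [poch_succ, ih, Nat.factorial_succ, pow_succ]
    push_cast
    linear_combination (-1 : ℝ) ^ i * i.factorial * key

lemma poch_two_mul (x : ℝ) (i : ℕ) :
    poch x (2 * i) = 4 ^ i * poch (x / 2) i * poch ((x + 1) / 2) i := by
  induction i with
  | zero => simp [poch_zero]
  | succ i ih =>
    rw [show 2 * (i + 1) = 2 * i + 1 + 1 by ring, poch_succ, poch_succ, ih, poch_succ, poch_succ]
    push_cast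
    ring

lemma poch_half_sub_nat_ne_zero {x : ℝ} (N : ℕ) (hx : x = 1 / 2 - N) (n : ℕ) : poch x n ≠ 0 :=
  prod_ne_zero_iff.mpr fun i _ h => by
    have : (2 * i + 1 : ℝ) = 2 * N := by rw [hx] at h; linear_combination 2 * h
    exact absurd (by exact_mod_cast this : 2 * i + 1 = 2 * N) (by omega)

-- Sums are written without denominators: over `i ≤ m`, `poch (q + i) (m - i)` stands for
-- `(q)_m / (q)_i` and `(-1) ^ i * m.choose i` for `(-m)_i / i!`.
theorem chu_vandermonde (n : ℕ) (B C : ℝ) :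
    ∑ i ∈ range (n + 1), (-1) ^ i * (n.choose i : ℝ) * poch B i * poch (C + i) (n - i)
      = poch (C - B) n := by
  induction n generalizing C with
  | zero => simp [poch_zero]
  | succ n ih =>
    have pascal := sum_choose_succ_mul (fun i k => (-1 : ℝ) ^ i * poch B i * poch (C + i) k) n
    calc _ = ∑ i ∈ range (n + 2), ((n + 1).choose i : ℝ) *
            ((-1) ^ i * poch B i * poch (C + i) (n + 1 - i)) :=
          sum_congr rfl fun i _ => by ring
      _ = (C - B) * ∑ i ∈ range (n + 1),
            (-1) ^ i * (n.choose i : ℝ) * poch B i * poch (C + 1 + i) (n - i) := by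
          rw [pascal, ← sum_add_distrib, mul_sum]
          refine sum_congr rfl fun i hi => ?_
          have hi : i ≤ n := mem_range_succ_iff.mp hi
          rw [show n + 1 - i = n - i + 1 by omega, poch_succ', poch_succ]
          push_cast
          ring_nf
      _ = poch (C - B) (n + 1) := by
          rw [ih, poch_succ']
          ring_nf

lemma sheppard_term {N s k : ℕ} (hs : s ≤ N) (hk : k ≤ s) (A B C D : ℝ) :
    (N.choose k : ℝ) * poch B k * poch (C - A) k * poch (C + k) (N - k) *
        ((-1) ^ (s - k) * ((N - k).choose (s - k) : ℝ) * poch (B + k) (s - k) *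
          poch (D + k + (s - k : ℕ)) (N - k - (s - k)))
      = (-1) ^ s * (N.choose s : ℝ) * poch B s * poch (C + s) (N - s) * poch (D + s) (N - s) *
        ((-1) ^ k * (s.choose k : ℝ) * poch (C - A) k * poch (C + k) (s - k)) := by
  have hcast : ((s - k : ℕ) : ℝ) = s - k := Nat.cast_sub hk
  have hchoose : (N.choose s : ℝ) * s.choose k = N.choose k * (N - k).choose (s - k) := by
    exact_mod_cast Nat.choose_mul (n := N) (k := s) hk
  rw [poch_split (x := B) hk rfl, poch_split (m := N - k) (x := C + k) (Nat.sub_le_sub_right hs k)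
      (y := C + s) (by rw [hcast]; ring), show N - k - (s - k) = N - s by omega,
    show D + k + ((s - k : ℕ) : ℝ) = D + s by rw [hcast]; ring, neg_one_pow_sub hk]
  linear_combination -((-1 : ℝ) ^ s * (-1) ^ k * poch B k * poch (B + k) (s - k) *
      poch (C - A) k * poch (C + k) (s - k) * poch (C + s) (N - s) * poch (D + s) (N - s)) * hchoose

theorem sheppard (N : ℕ) (A B C D : ℝ) :
    ∑ k ∈ range (N + 1), (-1) ^ k * (N.choose k : ℝ) * poch A k * poch B k *
        poch (C + k) (N - k) * poch (D + k) (N - k)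
      = ∑ k ∈ range (N + 1), (N.choose k : ℝ) * poch B k * poch (C - A) k *
        poch (C + k) (N - k) * poch (D - B) (N - k) := by
  set f : ℕ → ℕ → ℝ := fun k j => (N.choose k : ℝ) * poch B k * poch (C - A) k *
    poch (C + k) (N - k) * ((-1) ^ j * ((N - k).choose j : ℝ) * poch (B + k) j *
      poch (D + k + j) (N - k - j))
  symm
  calc _ = ∑ k ∈ range (N + 1), ∑ j ∈ range (N + 1 - k), f k j := by
        refine sum_congr rfl fun k hk => ?_
        have hk : k ≤ N := mem_range_succ_iff.mp hk
        rw [← mul_sum, Nat.sub_add_comm hk, chu_vandermonde, add_sub_add_right_eq_sub]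
    _ = ∑ s ∈ range (N + 1), ∑ k ∈ range (s + 1), f k (s - k) := (sum_range_diag_flip _ f).symm
    _ = ∑ s ∈ range (N + 1), (-1) ^ s * (N.choose s : ℝ) * poch B s * poch (C + s) (N - s) *
          poch (D + s) (N - s) * ∑ k ∈ range (s + 1),
            (-1) ^ k * (s.choose k : ℝ) * poch (C - A) k * poch (C + k) (s - k) := by
        refine sum_congr rfl fun s hs => ?_
        rw [mul_sum]
        refine sum_congr rfl fun k hk => ?_
        exact sheppard_term (mem_range_succ_iff.mp hs)
          (mem_range_succ_iff.mp hk) A B C D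
    _ = _ := by
        refine sum_congr rfl fun s _ => ?_
        rw [chu_vandermonde, sub_sub_cancel]
        ring

-- The balanced case `D = 1 + a + b - c - n` of Sheppard's transformation, whose right side is then
-- a Chu–Vandermonde sum.
theorem pfaff_saalschutz (n : ℕ) (a b c : ℝ) :
    ∑ i ∈ range (n + 1), (n.choose i : ℝ) * poch a i * poch b i * poch (c + i) (n - i) *
        poch (c - a - b) (n - i)
      = poch (c - a) n * poch (c - b) n := by
  set D := 1 + a + b - c - n
  calc _ = (-1) ^ n * ∑ i ∈ range (n + 1), (-1) ^ i * (n.choose i : ℝ) * poch a i * poch b i *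
            poch (c + i) (n - i) * poch (D + i) (n - i) := by
        rw [mul_sum]
        refine sum_congr rfl fun i hi => ?_
        have hi : i ≤ n := mem_range_succ_iff.mp hi
        rw [poch_reflect (x := c - a - b) (y := D + i) (by rw [Nat.cast_sub hi]; ring),
          neg_one_pow_sub hi]
        ring
    _ = poch (c - a) n * ∑ k ∈ range (n + 1), (-1) ^ k * (n.choose k : ℝ) * poch b k *
            poch (c + k) (n - k) := by
        rw [sheppard, mul_sum, mul_sum]
        refine sum_congr rfl fun k hk => ?_
        have hk : k ≤ n := mem_range_succ_iff.mp hk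
        rw [poch_reflect (x := D - b) (y := c - a + k) (by rw [Nat.cast_sub hk]; ring),
          poch_split (x := c - a) hk rfl, neg_one_pow_sub hk]
        linear_combination (n.choose k : ℝ) * poch b k * poch (c - a) k * poch (c + k) (n - k) *
          poch (c - a + k) (n - k) * (-1) ^ k * neg_one_pow_mul_self n
    _ = _ := by rw [chu_vandermonde]

lemma sum_range_triangle_comm (M : ℕ) (f : ℕ → ℕ → ℝ) :
    ∑ k ∈ range (M + 1), ∑ j ∈ range (M + 1 - k), f k j
      = ∑ j ∈ range (M + 1), ∑ k ∈ range (M + 1 - j), f k j := by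
  rw [sum_sigma', sum_sigma']
  refine sum_nbij' (fun p => ⟨p.2, p.1⟩) (fun p => ⟨p.2, p.1⟩) ?_ ?_ (fun _ _ => rfl)
    (fun _ _ => rfl) (fun _ _ => rfl) <;>
  simp only [mem_sigma, mem_range, Sigma.forall] <;> lia

lemma choose_mul_choose_sub_comm (m k j : ℕ) :
    m.choose k * (m - k).choose j = m.choose j * (m - j).choose k := by
  have hk := Nat.choose_mul (n := m) (k := k + j) (s := k) (Nat.le_add_right k j)
  have hj := Nat.choose_mul (n := m) (k := k + j) (s := j) (Nat.le_add_left j k)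
  rw [Nat.add_sub_cancel_left] at hk
  rw [Nat.add_sub_cancel] at hj
  rw [← hk, ← hj, Nat.choose_symm_add]

lemma whipple_term {m j k : ℕ} (hjk : j + k ≤ m) {x y z u v w : ℝ}
    (hw : x + y + z + 1 = m + u + v + w) :
    (-1) ^ k * (m.choose k : ℝ) * poch x k * poch y k * poch z k * poch (u + k) (m - k) *
        (((m - k).choose j : ℝ) * poch (w - z) j * poch (v - z) j *
          poch (v + w - z + k + j) (m - k - j) * poch (z + k) (m - k - j))
      = (-1) ^ (m - j) * (m.choose j : ℝ) * poch (w - z) j * poch (v - z) j * poch z (m - j) *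
          poch (u + (m - j : ℕ)) j *
        (((m - j).choose k : ℝ) * poch x k * poch y k * poch (u + k) (m - j - k) *
          poch (u - x - y) (m - j - k)) := by
  have hchoose : (m.choose k : ℝ) * (m - k).choose j = m.choose j * (m - j).choose k := by
    exact_mod_cast choose_mul_choose_sub_comm m k j
  have hj : j ≤ m := by omega
  have hk : k ≤ m - j := by omega
  rw [show m - k - j = m - j - k by omega, poch_split (x := z) (m := m - j) hk rfl,
    poch_split (x := u + k) (m := m - k) (i := m - j - k) (by omega) (y := u + (m - j : ℕ))
      (by push_cast [Nat.cast_sub hj, Nat.cast_sub hk]; ring),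
    show m - k - (m - j - k) = j by omega,
    poch_reflect (x := v + w - z + k + j) (y := u - x - y)
      (by push_cast [Nat.cast_sub hj, Nat.cast_sub hk]; linarith),
    neg_one_pow_sub hk]
  set P := poch x k * poch y k * poch z k * poch (z + k) (m - j - k) * poch (u + k) (m - j - k) *
    poch (u + (m - j : ℕ)) j * poch (w - z) j * poch (v - z) j * poch (u - x - y) (m - j - k)
  linear_combination (-1 : ℝ) ^ (m - j) * P *
    (hchoose * (-1) ^ k * (-1) ^ k + (m.choose j : ℝ) * (m - j).choose k * neg_one_pow_mul_self k)

-- Expand `(v + k)_{m-k} (w + k)_{m-k}` by Pfaff–Saalschütz, exchange the two sums and sum the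
-- inner one by Pfaff–Saalschütz again.
theorem whipple (m : ℕ) {x y z u v w : ℝ} (hw : x + y + z + 1 = m + u + v + w) :
    ∑ k ∈ range (m + 1), (-1) ^ k * (m.choose k : ℝ) * poch x k * poch y k * poch z k *
        poch (u + k) (m - k) * poch (v + k) (m - k) * poch (w + k) (m - k)
      = ∑ k ∈ range (m + 1), (-1) ^ k * (m.choose k : ℝ) * poch (u - x) k * poch (u - y) k *
        poch z k * poch (u + k) (m - k) * poch (v - z) (m - k) * poch (w - z) (m - k) := by
  set F : ℕ → ℕ → ℝ := fun k j => (-1) ^ k * (m.choose k : ℝ) * poch x k * poch y k * poch z k *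
    poch (u + k) (m - k) * (((m - k).choose j : ℝ) * poch (w - z) j * poch (v - z) j *
      poch (v + w - z + k + j) (m - k - j) * poch (z + k) (m - k - j))
  set G : ℕ → ℝ := fun j => (-1) ^ (m - j) * (m.choose j : ℝ) * poch (w - z) j * poch (v - z) j *
    poch z (m - j) * poch (u + (m - j : ℕ)) j
  calc _ = ∑ k ∈ range (m + 1), ∑ j ∈ range (m + 1 - k), F k j := by
        refine sum_congr rfl fun k hk => ?_
        have hk : k ≤ m := mem_range_succ_iff.mp hk
        have hps := pfaff_saalschutz (m - k) (w - z) (v - z) (v + w - z + k)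
        rw [show v + w - z + k - (w - z) - (v - z) = z + k by ring,
          show v + w - z + k - (w - z) = v + k by ring,
          show v + w - z + k - (v - z) = w + k by ring, ← Nat.sub_add_comm hk] at hps
        rw [mul_assoc _ (poch (v + k) (m - k)), ← hps, mul_sum]
    _ = ∑ j ∈ range (m + 1), ∑ k ∈ range (m + 1 - j), F k j := sum_range_triangle_comm m F
    _ = ∑ j ∈ range (m + 1), G j * (poch (u - x) (m - j) * poch (u - y) (m - j)) := by
        refine sum_congr rfl fun j hj => ?_
        have hj : j ≤ m := mem_range_succ_iff.mp hj
        have hps := pfaff_saalschutz (m - j) x y u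
        rw [← Nat.sub_add_comm hj] at hps
        rw [← hps, mul_sum]
        refine sum_congr rfl fun k hk => ?_
        exact whipple_term (by have := mem_range.mp hk; omega) hw
    _ = _ := by
        rw [← sum_range_reflect]
        refine sum_congr rfl fun k hk => ?_
        have hk : k ≤ m := mem_range_succ_iff.mp hk
        simp only [G, Nat.add_sub_cancel, Nat.sub_sub_self hk, Nat.choose_symm hk]
        ring

section DoubleSum

variable (m n : ℕ) (a b c κ : ℝ)

lemma double_sum_term_split {i j : ℕ} (hi : i ≤ m) (hj : j ≤ n) :
    (-1) ^ (i + j) * (m.choose i : ℝ) * (n.choose j : ℝ) * poch (c + n) i * poch (c + m) j *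
        poch κ (i + j) * poch (a + i) (m - i) * poch (b + j) (n - j) *
        poch (c + i + j) (m + n - i - j)
      = poch (c + m) n * ((-1) ^ j * (n.choose j : ℝ) * poch κ j * poch (b + j) (n - j)) *
        ((-1) ^ i * (m.choose i : ℝ) * poch (c + n) i * poch (κ + j) i * poch (a + i) (m - i) *
          poch (c + j + i) (m - i)) := by
  rw [add_comm i j, poch_add κ j i, poch_split (x := c + m) hj rfl,
    show m + n - i - j = m - i + (n - j) by omega, show c + (i : ℝ) + j = c + j + i by ring,
    poch_add_of_eq (x := c + j + i) (y := c + m + j) (by rw [Nat.cast_sub hi]; ring), pow_add]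
  ring

lemma double_sum_inner_eq {j : ℕ} (hj : j ≤ n) :
    ∑ i ∈ range (m + 1), (-1) ^ (i + j) * (m.choose i : ℝ) * (n.choose j : ℝ) * poch (c + n) i *
        poch (c + m) j * poch κ (i + j) * poch (a + i) (m - i) * poch (b + j) (n - j) *
        poch (c + i + j) (m + n - i - j)
      = poch (c + m) n * ((-1) ^ j * (n.choose j : ℝ) * poch κ j * poch (b + j) (n - j)) *
        ∑ l ∈ range (m + 1), (m.choose l : ℝ) * poch (κ + j) l * poch (a - c - n) l *
          poch (a + l) (m - l) * poch (c - κ) (m - l) := by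
  rw [sum_congr rfl fun i hi => double_sum_term_split m n a b c κ
      (mem_range_succ_iff.mp hi) hj, ← mul_sum, sheppard,
    sub_add_eq_sub_sub, add_sub_add_right_eq_sub]

lemma double_sum_eq_single_sum :
    ∑ i ∈ range (m + 1), ∑ j ∈ range (n + 1), (-1) ^ (i + j) * (m.choose i : ℝ) *
        (n.choose j : ℝ) * poch (c + n) i * poch (c + m) j * poch κ (i + j) *
        poch (a + i) (m - i) * poch (b + j) (n - j) * poch (c + i + j) (m + n - i - j)
      = poch (c + m) n * ∑ l ∈ range (m + 1), (m.choose l : ℝ) * poch (a - c - n) l * poch κ l *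
          poch (a + l) (m - l) * poch (c - κ) (m - l) * poch (b - κ - l) n := by
  rw [sum_comm, sum_congr rfl fun j hj => double_sum_inner_eq m n a b c κ
    (mem_range_succ_iff.mp hj)]
  simp only [mul_sum]
  rw [sum_comm]
  refine sum_congr rfl fun l _ => ?_
  rw [show b - κ - l = b - (κ + l) by ring, ← chu_vandermonde n (κ + l) b, mul_sum, mul_sum]
  refine sum_congr rfl fun j _ => ?_
  have hκ : poch κ j * poch (κ + j) l = poch κ l * poch (κ + l) j := by
    rw [← poch_add, ← poch_add, add_comm]
  linear_combination poch (c + m) n * (-1) ^ j * (n.choose j : ℝ) * poch (b + j) (n - j) *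
    (m.choose l : ℝ) * poch (a - c - n) l * poch (a + l) (m - l) * poch (c - κ) (m - l) * hκ

lemma single_sum_term {l : ℕ} (hl : l ≤ m) :
    poch (1 - b + κ - n) m * ((m.choose l : ℝ) * poch (a - c - n) l * poch κ l *
        poch (a + l) (m - l) * poch (c - κ) (m - l) * poch (b - κ - l) n)
      = (-1) ^ m * poch (b - κ) n * ((-1) ^ l * (m.choose l : ℝ) * poch (a - c - n) l *
        poch (1 - b + κ) l * poch κ l * poch (a + l) (m - l) * poch (1 - c + κ - m + l) (m - l) *
        poch (1 - b + κ - n + l) (m - l)) := by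
  have hshift := poch_sub_mul_poch (b - κ) l n
  rw [show 1 - (b - κ) - n = 1 - b + κ - n by ring, show 1 - (b - κ) = 1 - b + κ by ring]
    at hshift
  rw [poch_split (x := 1 - b + κ - n) hl rfl,
    poch_reflect (x := c - κ) (y := 1 - c + κ - m + l) (by rw [Nat.cast_sub hl]; ring),
    neg_one_pow_sub hl]
  linear_combination (-1 : ℝ) ^ m * (-1) ^ l * (m.choose l : ℝ) * poch (a - c - n) l * poch κ l *
    poch (a + l) (m - l) * poch (1 - c + κ - m + l) (m - l) * poch (1 - b + κ - n + l) (m - l) *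
    hshift

lemma single_sum_whipple :
    poch (1 - b + κ - n) m * ∑ l ∈ range (m + 1), (m.choose l : ℝ) * poch (a - c - n) l *
        poch κ l * poch (a + l) (m - l) * poch (c - κ) (m - l) * poch (b - κ - l) n
      = (-1) ^ m * poch (b - κ) n * ∑ k ∈ range (m + 1), (-1) ^ k * (m.choose k : ℝ) *
        poch (c + n) k * poch (a + b - κ - 1) k * poch κ k * poch (a + k) (m - k) *
        poch (b + n - m + k) (m - k) * poch (c + k) (m - k) := by
  rw [mul_sum, sum_congr rfl fun l hl => single_sum_term m n a b c κ
    (mem_range_succ_iff.mp hl), ← mul_sum, whipple m (by ring)]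
  congr 1
  refine sum_congr rfl fun k hk => ?_
  have hk : k ≤ m := mem_range_succ_iff.mp hk
  rw [show a - (a - c - n) = c + n by ring, show a - (1 - b + κ) = a + b - κ - 1 by ring,
    poch_reflect (x := 1 - c + κ - m - κ) (y := c + k) (by rw [Nat.cast_sub hk]; ring),
    poch_reflect (x := 1 - b + κ - n - κ) (y := b + n - m + k) (by rw [Nat.cast_sub hk]; ring)]
  linear_combination (-1 : ℝ) ^ k * (m.choose k : ℝ) * poch (c + n) k * poch (a + b - κ - 1) k *
    poch κ k * poch (a + k) (m - k) * poch (b + n - m + k) (m - k) * poch (c + k) (m - k) *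
    neg_one_pow_mul_self (m - k)

lemma double_sum_div_eq (ha : poch a m ≠ 0) (hb : poch b n ≠ 0) (hc : poch c (m + n) ≠ 0) :
    ∑ i ∈ range (m + 1), ∑ j ∈ range (n + 1),
        poch (-m) i * poch (-n) j * poch (c + n) i * poch (c + m) j * poch κ (i + j) /
          (i.factorial * j.factorial * poch a i * poch b j * poch c (i + j))
      = (∑ i ∈ range (m + 1), ∑ j ∈ range (n + 1), (-1) ^ (i + j) * (m.choose i : ℝ) *
          (n.choose j : ℝ) * poch (c + n) i * poch (c + m) j * poch κ (i + j) *
          poch (a + i) (m - i) * poch (b + j) (n - j) * poch (c + i + j) (m + n - i - j)) /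
        (poch a m * poch b n * poch c (m + n)) := by
  rw [sum_div]
  refine sum_congr rfl fun i hi => ?_
  rw [sum_div]
  refine sum_congr rfl fun j hj => ?_
  have hi : i ≤ m := mem_range_succ_iff.mp hi
  have hj : j ≤ n := mem_range_succ_iff.mp hj
  rw [div_eq_div_iff (by simp [Nat.factorial_ne_zero, poch_ne_zero_of_le ha hi,
      poch_ne_zero_of_le hb hj, poch_ne_zero_of_le hc (add_le_add hi hj)])
      (by simp [ha, hb, hc]),
    poch_neg_nat, poch_neg_nat, poch_split (x := a) hi rfl, poch_split (x := b) hj rfl,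
    poch_split (x := c) (add_le_add hi hj) (y := c + i + j) (by push_cast; ring), ← Nat.sub_sub]
  ring

lemma single_sum_div_eq (ha : poch a m ≠ 0) (hd : poch (b + n - m) m ≠ 0) (hc : poch c m ≠ 0) :
    ∑ i ∈ range (m + 1), poch (-m) i * poch (c + n) i * poch κ i * poch (a + b - κ - 1) i /
        (i.factorial * poch a i * poch (b + n - m) i * poch c i)
      = (∑ i ∈ range (m + 1), (-1) ^ i * (m.choose i : ℝ) * poch (c + n) i *
          poch (a + b - κ - 1) i * poch κ i * poch (a + i) (m - i) *
          poch (b + n - m + i) (m - i) * poch (c + i) (m - i)) /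
        (poch a m * poch (b + n - m) m * poch c m) := by
  rw [sum_div]
  refine sum_congr rfl fun i hi => ?_
  have hi : i ≤ m := mem_range_succ_iff.mp hi
  rw [div_eq_div_iff (by simp [Nat.factorial_ne_zero, poch_ne_zero_of_le ha hi,
      poch_ne_zero_of_le hd hi, poch_ne_zero_of_le hc hi]) (by simp [ha, hd, hc]),
    poch_neg_nat, poch_split (x := a) hi rfl, poch_split (x := b + n - m) hi rfl,
    poch_split (x := c) hi rfl]
  ring

theorem double_sum_reduction (ha : poch a m ≠ 0) (hb : poch b n ≠ 0) (hc : poch c (m + n) ≠ 0)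
    (hd : poch (b + n - m) m ≠ 0) (hκ : poch (1 - b + κ - n) m ≠ 0) :
    ∑ i ∈ range (m + 1), ∑ j ∈ range (n + 1),
        poch (-m) i * poch (-n) j * poch (c + n) i * poch (c + m) j * poch κ (i + j) /
          (i.factorial * j.factorial * poch a i * poch b j * poch c (i + j))
      = poch (1 - b + κ - n) n * poch (1 - b - n) m /
          (poch (1 - b - n) n * poch (1 - b + κ - n) m) *
        ∑ i ∈ range (m + 1), poch (-m) i * poch (c + n) i * poch κ i * poch (a + b - κ - 1) i /
          (i.factorial * poch a i * poch (b + n - m) i * poch c i) := by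
  have hcm : poch c m ≠ 0 := poch_ne_zero_of_le hc (Nat.le_add_right m n)
  have hcmn : poch (c + m) n ≠ 0 := right_ne_zero_of_mul (poch_add c m n ▸ hc)
  have hnormal := double_sum_eq_single_sum m n a b c κ
  rw [← mul_right_inj' hκ, mul_left_comm, single_sum_whipple] at hnormal
  rw [double_sum_div_eq m n a b c κ ha hb hc, single_sum_div_eq m n a b c κ ha hd hcm,
    poch_reflect (x := 1 - b + κ - n) (y := b - κ) (n := n) (by ring),
    poch_reflect (x := 1 - b - n) (y := b + n - m) (n := m) (by ring),
    poch_reflect (x := 1 - b - n) (y := b) (n := n) (by ring), poch_add c m n]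
  field_simp
  linear_combination hnormal

end DoubleSum

lemma poch_add_ratio {x y x' y' : ℝ} {k : ℕ} (hx : poch x k ≠ 0) (hy : poch y k ≠ 0)
    (hx' : x + k = x') (hy' : y + k = y') (m n : ℕ) :
    poch x (k + n) * poch y (k + m) / (poch y (k + n) * poch x (k + m))
      = poch x' n * poch y' m / (poch y' n * poch x' m) := by
  simp only [poch_add, hx', hy']
  rw [show poch x k * poch x' n * (poch y k * poch y' m) /
      (poch y k * poch y' n * (poch x k * poch x' m))
      = poch x k * poch y k * (poch x' n * poch y' m) /
        (poch x k * poch y k * (poch y' n * poch x' m)) by ring,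
    mul_div_mul_left _ _ (mul_ne_zero hx hy)]

lemma poch_neg_half_mul_poch {α : ℕ} {x : ℝ} (hx : x = 1 / 2 - (α / 2 : ℕ) - (α % 2 : ℕ))
    (i : ℕ) : poch (-(α : ℝ) / 2) i * poch ((1 - α) / 2) i = poch (-(α / 2 : ℕ)) i * poch x i := by
  obtain ⟨q, rfl | rfl⟩ := Nat.even_or_odd' α
  · rw [hx, show 2 * q / 2 = q by omega, show 2 * q % 2 = 0 by omega]
    push_cast
    ring_nf
  · rw [hx, show (2 * q + 1) / 2 = q by omega, show (2 * q + 1) % 2 = 1 by omega, mul_comm]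
    push_cast
    ring_nf

lemma poch_neg_two_mul_div (α β i j : ℕ) {x y : ℝ} (P D : ℝ)
    (hx : x = 1 / 2 - (α / 2 : ℕ) - (α % 2 : ℕ)) (hy : y = 1 / 2 - (β / 2 : ℕ) - (β % 2 : ℕ)) :
    poch (-(α : ℝ)) (2 * i) * poch (-(β : ℝ)) (2 * j) * P / (D * 2 ^ (2 * i + 2 * j))
      = poch (-(α / 2 : ℕ)) i * poch (-(β / 2 : ℕ)) j * poch x i * poch y j * P / D := by
  rw [poch_two_mul, poch_two_mul, mul_assoc _ (poch (-(α : ℝ) / 2) i),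
    mul_assoc _ (poch (-(β : ℝ) / 2) j), neg_add_eq_sub, neg_add_eq_sub,
    poch_neg_half_mul_poch hx, poch_neg_half_mul_poch hy, pow_add, pow_mul, pow_mul]
  field_simp
  ring

theorem stmt14_general (α₁ α₂ α₃ α₄ : ℕ) (κ : ℝ)
    (hp2 : α₂ % 2 = α₄ % 2) (hp3 : α₃ % 2 = α₄ % 2)
    (hκ : poch (κ + 1/2) ((α₂ + α₄) / 2) ≠ 0) :
    (∑ i ∈ Finset.range (α₄ / 2 + 1), ∑ j ∈ Finset.range (α₃ / 2 + 1),
      poch (-(α₄ : ℝ)) (2 * i) * poch (-(α₃ : ℝ)) (2 * j) * poch κ (i + j) /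
        ((Nat.factorial i : ℝ) * (Nat.factorial j : ℝ) *
          poch (1/2 - (((α₁ + α₄) / 2 : ℕ) : ℝ)) i *
          poch (1/2 - (((α₂ + α₃) / 2 : ℕ) : ℝ)) j *
          poch (1/2 - (((α₃ + α₄) / 2 : ℕ) : ℝ)) (i + j) * (2 : ℝ) ^ (2 * i + 2 * j)))
    = (poch (κ + 1/2) ((α₂ + α₃) / 2) * poch (1/2) ((α₂ + α₄) / 2) /
        (poch (1/2) ((α₂ + α₃) / 2) * poch (κ + 1/2) ((α₂ + α₄) / 2))) *
      ∑ i ∈ Finset.range (α₄ / 2 + 1),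
        poch (-(α₄ : ℝ) / 2) i * poch ((1 - (α₄ : ℝ)) / 2) i * poch κ i *
            poch (-κ - (((α₁ + α₄) / 2 : ℕ) : ℝ) - (((α₂ + α₃) / 2 : ℕ) : ℝ)) i /
          ((Nat.factorial i : ℝ) * poch (1/2 - (((α₁ + α₄) / 2 : ℕ) : ℝ)) i *
            poch (1/2 - (((α₂ + α₄) / 2 : ℕ) : ℝ)) i *
            poch (1/2 - (((α₃ + α₄) / 2 : ℕ) : ℝ)) i) := by
  set k := α₂ / 2 + α₄ % 2
  have hb0 : (α₂ + α₃) / 2 = k + α₃ / 2 := by omega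
  have hb2 : (α₂ + α₄) / 2 = k + α₄ / 2 := by omega
  have hb3 : (α₃ + α₄) / 2 = α₃ / 2 + α₄ / 2 + α₄ % 2 := by omega
  rw [hb2] at hκ
  rw [hb0, hb2, hb3]
  have hκk := right_ne_zero_of_mul (poch_add (κ + 1 / 2) k (α₄ / 2) ▸ hκ)
  convert double_sum_reduction (α₄ / 2) (α₃ / 2) (1 / 2 - (((α₁ + α₄) / 2 : ℕ) : ℝ))
    (1 / 2 - ((k + α₃ / 2 : ℕ) : ℝ)) (1 / 2 - ((α₃ / 2 + α₄ / 2 + α₄ % 2 : ℕ) : ℝ)) κ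
    (poch_half_sub_nat_ne_zero _ rfl _) (poch_half_sub_nat_ne_zero _ rfl _)
    (poch_half_sub_nat_ne_zero _ rfl _)
    (poch_half_sub_nat_ne_zero (k + α₄ / 2) (by push_cast; ring) _)
    (by convert hκk using 2; push_cast; ring) using 1
  · refine sum_congr rfl fun i _ => sum_congr rfl fun j _ => ?_
    exact poch_neg_two_mul_div _ _ _ _ _ _ (by push_cast; ring) (by rw [hp3]; push_cast; ring)
  · congr 1
    · exact poch_add_ratio (poch_ne_zero_of_le hκ (Nat.le_add_right k _))
        (poch_half_sub_nat_ne_zero 0 (by simp) k) (by push_cast; ring) (by push_cast; ring) _ _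
    · refine sum_congr rfl fun i _ => ?_
      rw [poch_neg_half_mul_poch (x := 1 / 2 - ((α₃ / 2 + α₄ / 2 + α₄ % 2 : ℕ) : ℝ) + (α₃ / 2 : ℕ))
        (by push_cast; ring)]
      push_cast
      ring_nf

/-- Reduction of the double sum for the moments s(α) to a single balanced
    terminating ₄F₃ sum. -/
theorem stmt14 (α₁ α₂ α₃ α₄ : ℕ) (κ : ℝ)
    (hp1 : α₁ % 2 = α₄ % 2) (hp2 : α₂ % 2 = α₄ % 2) (hp3 : α₃ % 2 = α₄ % 2)
    (hκ : poch (κ + 1/2) ((α₂ + α₄) / 2) ≠ 0) :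
    (∑ i ∈ Finset.range (α₄ / 2 + 1), ∑ j ∈ Finset.range (α₃ / 2 + 1),
      poch (-(α₄ : ℝ)) (2 * i) * poch (-(α₃ : ℝ)) (2 * j) * poch κ (i + j) /
        ((Nat.factorial i : ℝ) * (Nat.factorial j : ℝ) *
          poch (1/2 - (((α₁ + α₄) / 2 : ℕ) : ℝ)) i *
          poch (1/2 - (((α₂ + α₃) / 2 : ℕ) : ℝ)) j *
          poch (1/2 - (((α₃ + α₄) / 2 : ℕ) : ℝ)) (i + j) * (2 : ℝ) ^ (2 * i + 2 * j)))
    = (poch (κ + 1/2) ((α₂ + α₃) / 2) * poch (1/2) ((α₂ + α₄) / 2) /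
        (poch (1/2) ((α₂ + α₃) / 2) * poch (κ + 1/2) ((α₂ + α₄) / 2))) *
      ∑ i ∈ Finset.range (α₄ / 2 + 1),
        poch (-(α₄ : ℝ) / 2) i * poch ((1 - (α₄ : ℝ)) / 2) i * poch κ i *
            poch (-κ - (((α₁ + α₄) / 2 : ℕ) : ℝ) - (((α₂ + α₃) / 2 : ℕ) : ℝ)) i /
          ((Nat.factorial i : ℝ) * poch (1/2 - (((α₁ + α₄) / 2 : ℕ) : ℝ)) i *
            poch (1/2 - (((α₂ + α₄) / 2 : ℕ) : ℝ)) i *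
            poch (1/2 - (((α₃ + α₄) / 2 : ℕ) : ℝ)) i) :=
  stmt14_general α₁ α₂ α₃ α₄ κ hp2 hp3 hκ
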